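/- arXiv:2512.12407 — 3 statements merged into one kernel-verified Lean document; each statement's English description precedes it below -/
import Mathlib

section
/- (Lemma 3.5.) For i = 1, …, q let C_i ∈ ℂ^{p_i×p_i} be a matrix in *congruence canonical form given by explicit block data, i.e., C_i = ⊕_j J_{k_j^{(i)}}(0) ⊕ ⊕_j α_j^{(i)}Γ_{ℓ_j^{(i)}} ⊕ ⊕_j H_{2m_j^{(i)}}(μ_j^{(i)}) with |α_j^{(i)}| = 1 and |μ_j^{(i)}| > 1, and let A_i belong to the closure of ℬ*(C_i). Suppose that for all i ≠ j: 𝒮*_{Γ,2}(C_i) ∩ 𝒮*_{Γ,2}(C_j) = ∅, 𝒮*_{Γ,2}(C_i) ∩ 𝒮*_{Γ,2,neg}(C_j) = ∅, and 𝒮*_H(C_i) ∩ 𝒮*_H(C_j) = ∅. Then A_1 ⊕ ⋯ ⊕ A_q belongs to the closure of ℬ*(C_1 ⊕ ⋯ ⊕ C_q). -/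
open Matrix

noncomputable section

/-- The `k × k` Jordan block `J_k(μ)` (eigenvalue `μ` on the diagonal, `1` on the
superdiagonal). -/
def Jblock (k : ℕ) (μ : ℂ) : Matrix (Fin k) (Fin k) ℂ :=
  Matrix.of fun i j =>
    if (j : ℕ) = (i : ℕ) then μ else if (j : ℕ) = (i : ℕ) + 1 then 1 else 0

/-- The `k × k` matrix `Γ_k`: in 1-based indexing, the `(i,j)` entry is `(-1)^(k-i)`
when `j = k+1-i` or `j = k+2-i`, and `0` otherwise. -/
def Gamma (k : ℕ) : Matrix (Fin k) (Fin k) ℂ :=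
  Matrix.of fun i j =>
    if (i : ℕ) + (j : ℕ) = k - 1 ∨ (i : ℕ) + (j : ℕ) = k then
      (-1 : ℂ) ^ (k - 1 - (i : ℕ)) else 0

/-- Block-diagonal direct sum of two square complex matrices. -/
def dsum {m n : ℕ} (A : Matrix (Fin m) (Fin m) ℂ) (B : Matrix (Fin n) (Fin n) ℂ) :
    Matrix (Fin (m + n)) (Fin (m + n)) ℂ :=
  Matrix.reindex finSumFinEquiv finSumFinEquiv (Matrix.fromBlocks A 0 0 B)

/-- The `2k × 2k` matrix `H_{2k}(μ) = [[0, I_k], [J_k(μ), 0]]`. -/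
def Hblock (k : ℕ) (μ : ℂ) : Matrix (Fin (k + k)) (Fin (k + k)) ℂ :=
  Matrix.reindex finSumFinEquiv finSumFinEquiv (Matrix.fromBlocks 0 1 (Jblock k μ) 0)

/-- The total size of a family of sizes `p : Fin q → ℕ`. -/
def finSize : {q : ℕ} → (Fin q → ℕ) → ℕ
  | 0, _ => 0
  | _ + 1, p => p 0 + finSize fun i => p i.succ

/-- Block-diagonal direct sum of a family of square complex matrices of sizes
`p 0, …, p (q-1)`. -/
def finDsum : {q : ℕ} → (p : Fin q → ℕ) →
    ((i : Fin q) → Matrix (Fin (p i)) (Fin (p i)) ℂ) →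
    Matrix (Fin (finSize p)) (Fin (finSize p)) ℂ
  | 0, _, _ => 0
  | _ + 1, p, M => dsum (M 0) (finDsum (fun i => p i.succ) fun i => M i.succ)

/-- Block data of a matrix in *congruence canonical form
`⊕ J_{k_i}(0) ⊕ ⊕ α_i Γ_{l_i} ⊕ ⊕ H_{2 m_i}(μ_i)`. -/
structure StarData : Type where
  n1 : ℕ
  n2 : ℕ
  n3 : ℕ
  k : Fin n1 → ℕ
  l : Fin n2 → ℕ
  a : Fin n2 → ℂ
  m : Fin n3 → ℕ
  mu : Fin n3 → ℂ

/-- The size of the canonical matrix described by the block data. -/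
def StarData.size (d : StarData) : ℕ :=
  finSize d.k + (finSize d.l + finSize fun i => d.m i + d.m i)

/-- The canonical matrix with the block structure of `d` but with the Type I and
Type II parameters replaced by `a` and `mu`. -/
def StarData.matWith (d : StarData) (a : Fin d.n2 → ℂ) (mu : Fin d.n3 → ℂ) :
    Matrix (Fin d.size) (Fin d.size) ℂ :=
  dsum (finDsum d.k fun i => Jblock (d.k i) 0)
    (dsum (finDsum d.l fun i => a i • Gamma (d.l i))
      (finDsum (fun i => d.m i + d.m i) fun i => Hblock (d.m i) (mu i)))

/-- Validity of the block data: all sizes are at least `1`, `|α_i| = 1` and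
`|μ_i| > 1`. -/
def StarData.Valid (d : StarData) : Prop :=
  (∀ i, 1 ≤ d.k i) ∧ (∀ i, 1 ≤ d.l i) ∧ (∀ i, 1 ≤ d.m i) ∧
    (∀ i, ‖d.a i‖ = 1) ∧ ∀ i, 1 < ‖d.mu i‖

/-- The constraints that the replaced parameters must satisfy in the definition of the
*congruence bundle of `d`. -/
def StarData.ParamsOK (d : StarData) (a : Fin d.n2 → ℂ) (mu : Fin d.n3 → ℂ) : Prop :=
  (∀ i, ‖a i‖ = 1) ∧ (∀ i, 1 < ‖mu i‖) ∧
    (∀ i j, d.l i % 2 = d.l j % 2 → (a i ^ 2 ≠ a j ^ 2 ↔ d.a i ^ 2 ≠ d.a j ^ 2)) ∧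
    (∀ i j, d.l i % 2 ≠ d.l j % 2 → (a i ^ 2 ≠ -(a j ^ 2) ↔ d.a i ^ 2 ≠ -(d.a j ^ 2))) ∧
    ∀ i j, mu i ≠ mu j ↔ d.mu i ≠ d.mu j

/-- The *congruence bundle `ℬ*(C)` of the canonical matrix `C` described by the block
data `d`. -/
def starBundle (d : StarData) : Set (Matrix (Fin d.size) (Fin d.size) ℂ) :=
  {A | ∃ (a : Fin d.n2 → ℂ) (mu : Fin d.n3 → ℂ) (P : Matrix (Fin d.size) (Fin d.size) ℂ),
    IsUnit P ∧ d.ParamsOK a mu ∧ A = P * d.matWith a mu * Pᴴ}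

/-- The parameter set `𝒮*_{Γ,2}(C) = {α_i² : 1 ≤ i ≤ n2}`. -/
def StarData.SG2 (d : StarData) : Set ℂ := Set.range fun i => d.a i ^ 2

/-- The parameter set `𝒮*_{Γ,2,neg}(C) = {-α_i² : 1 ≤ i ≤ n2}`. -/
def StarData.SG2neg (d : StarData) : Set ℂ := Set.range fun i => -(d.a i ^ 2)

/-- The parameter set `𝒮*_H(C) = {μ_i : 1 ≤ i ≤ n3}`. -/
def StarData.SH (d : StarData) : Set ℂ := Set.range d.mu

/-- The direct sum of two canonical matrices: concatenation of the block data. -/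
def StarData.append (d e : StarData) : StarData :=
  ⟨d.n1 + e.n1, d.n2 + e.n2, d.n3 + e.n3, Fin.append d.k e.k, Fin.append d.l e.l,
    Fin.append d.a e.a, Fin.append d.m e.m, Fin.append d.mu e.mu⟩

/-- The direct sum `C_1 ⊕ ⋯ ⊕ C_q` of a family of canonical matrices: concatenation of
the block data.  -/
def appendAll : {q : ℕ} → (Fin q → StarData) → StarData
  | 0, _ => ⟨0, 0, 0, Fin.elim0, Fin.elim0, Fin.elim0, Fin.elim0, Fin.elim0⟩
  | _ + 1, C => StarData.append (C 0) (appendAll fun i => C i.succ)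

/-!
By induction on `q` it suffices to treat two summands. If `A = P C(α, μ) Pᴴ` and
`B = Q C(α', μ') Qᴴ` lie in the bundles of `C₁` and `C₂`, then `A ⊕ B` is congruent to the
canonical matrix of `C₁ ⊕ C₂` with parameters `(α, α')` and `(μ, μ')`, up to a permutation of
rows and columns. These parameters satisfy the constraints of the bundle of `C₁ ⊕ C₂` as soon
as no `α_i²` equals some `±α'_j²` and no `μ_i` equals some `μ'_j`, because by the disjointness
of the parameter sets the same holds for the parameters of `C₁` and `C₂`. Replacing `α'` by
`e^{iθ} α'` and `μ'` by `(1 + θ) μ'` removes these coincidences for every small `θ > 0`, so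
letting `θ → 0` puts `A ⊕ B` in the closure of the bundle; continuity of `⊕` then passes from
the bundles to their closures.
-/

open Filter Topology

section PermCongr

variable {α : Type*} {m n o p : Type*}

def PermCongr (A : Matrix m m α) (B : Matrix n n α) : Prop :=
  ∃ e : m ≃ n, A = B.submatrix e e

theorem PermCongr.refl (A : Matrix m m α) : PermCongr A A :=
  ⟨Equiv.refl m, (submatrix_id_id A).symm⟩

theorem PermCongr.symm {A : Matrix m m α} {B : Matrix n n α} (h : PermCongr A B) :
    PermCongr B A := by
  obtain ⟨e, rfl⟩ := h
  exact ⟨e.symm, by simp⟩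

theorem PermCongr.trans {A : Matrix m m α} {B : Matrix n n α} {C : Matrix o o α}
    (hAB : PermCongr A B) (hBC : PermCongr B C) : PermCongr A C := by
  obtain ⟨e, rfl⟩ := hAB
  obtain ⟨f, rfl⟩ := hBC
  exact ⟨e.trans f, rfl⟩

theorem permCongr_reindex (e : m ≃ n) (A : Matrix m m α) : PermCongr (reindex e e A) A :=
  ⟨e.symm, rfl⟩

theorem PermCongr.exists_conj [Fintype m] [DecidableEq m] [Semiring α] [StarRing α]
    {A B : Matrix m m α} (h : PermCongr A B) : ∃ T, IsUnit T ∧ A = T * B * Tᴴ := by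
  obtain ⟨σ, rfl⟩ := h
  have hσ (τ : Equiv.Perm m) : τ.permMatrix α * τ⁻¹.permMatrix α = 1 := by
    rw [← permMatrix_mul, inv_mul_cancel, permMatrix_one]
  refine ⟨Equiv.Perm.permMatrix α σ,
    ⟨⟨_, _, hσ σ, by simpa using hσ σ⁻¹⟩, rfl⟩, ?_⟩
  rw [conjTranspose_permMatrix, PEquiv.toMatrix_toPEquiv_mul, PEquiv.mul_toMatrix_toPEquiv]
  rfl

section fromBlocks

variable [Zero α]

theorem PermCongr.fromBlocks {A : Matrix m m α} {A' : Matrix n n α} {B : Matrix o o α}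
    {B' : Matrix p p α} (hA : PermCongr A A') (hB : PermCongr B B') :
    PermCongr (fromBlocks A 0 0 B) (fromBlocks A' 0 0 B') := by
  obtain ⟨e, rfl⟩ := hA
  obtain ⟨f, rfl⟩ := hB
  exact ⟨e.sumCongr f, by ext (i | i) (j | j) <;> rfl⟩

theorem permCongr_fromBlocks_assoc (A : Matrix m m α) (B : Matrix n n α) (C : Matrix o o α) :
    PermCongr (fromBlocks (fromBlocks A 0 0 B) 0 0 C) (fromBlocks A 0 0 (fromBlocks B 0 0 C)) :=
  ⟨Equiv.sumAssoc m n o, by ext ((i | i) | i) ((j | j) | j) <;> rfl⟩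

theorem permCongr_fromBlocks_fromBlocks_comm (A : Matrix m m α) (B : Matrix n n α)
    (C : Matrix o o α) (D : Matrix p p α) :
    PermCongr (fromBlocks (fromBlocks A 0 0 B) 0 0 (fromBlocks C 0 0 D))
      (fromBlocks (fromBlocks A 0 0 C) 0 0 (fromBlocks B 0 0 D)) :=
  ⟨Equiv.sumSumSumComm m n o p, by ext ((i | i) | (i | i)) ((j | j) | (j | j)) <;> rfl⟩

theorem permCongr_fromBlocks_of_isEmpty [IsEmpty m] (A : Matrix m m α) (B : Matrix n n α) :
    PermCongr (fromBlocks A 0 0 B) B :=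
  ⟨Equiv.emptySum m n, by
    ext (i | i) (j | j) <;> first | exact isEmptyElim i | exact isEmptyElim j | rfl⟩

end fromBlocks

end PermCongr

section dsum

variable {m n m' n' p : ℕ}

theorem permCongr_dsum_fromBlocks (A : Matrix (Fin m) (Fin m) ℂ)
    (B : Matrix (Fin n) (Fin n) ℂ) :
    PermCongr (dsum A B) (fromBlocks A 0 0 B) :=
  permCongr_reindex _ _

theorem PermCongr.dsum {A : Matrix (Fin m) (Fin m) ℂ} {A' : Matrix (Fin m') (Fin m') ℂ}
    {B : Matrix (Fin n) (Fin n) ℂ} {B' : Matrix (Fin n') (Fin n') ℂ}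
    (hA : PermCongr A A') (hB : PermCongr B B') : PermCongr (dsum A B) (dsum A' B') :=
  (permCongr_dsum_fromBlocks A B).trans
    ((hA.fromBlocks hB).trans (permCongr_dsum_fromBlocks A' B').symm)

theorem permCongr_dsum_assoc (A : Matrix (Fin m) (Fin m) ℂ) (B : Matrix (Fin n) (Fin n) ℂ)
    (C : Matrix (Fin p) (Fin p) ℂ) : PermCongr (dsum (dsum A B) C) (dsum A (dsum B C)) :=
  (permCongr_dsum_fromBlocks _ C).trans <|
    ((permCongr_dsum_fromBlocks A B).fromBlocks (.refl C)).trans <|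
      (permCongr_fromBlocks_assoc A B C).trans <|
        ((PermCongr.refl A).fromBlocks (permCongr_dsum_fromBlocks B C).symm).trans
          (permCongr_dsum_fromBlocks A _).symm

theorem permCongr_dsum_dsum_dsum_comm (A : Matrix (Fin m) (Fin m) ℂ)
    (B : Matrix (Fin n) (Fin n) ℂ) (C : Matrix (Fin m') (Fin m') ℂ)
    (D : Matrix (Fin n') (Fin n') ℂ) :
    PermCongr (dsum (dsum A B) (dsum C D)) (dsum (dsum A C) (dsum B D)) :=
  (permCongr_dsum_fromBlocks _ _).trans <|
    ((permCongr_dsum_fromBlocks A B).fromBlocks (permCongr_dsum_fromBlocks C D)).trans <|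
      (permCongr_fromBlocks_fromBlocks_comm A B C D).trans <|
        ((permCongr_dsum_fromBlocks A C).fromBlocks (permCongr_dsum_fromBlocks B D)).symm.trans
          (permCongr_dsum_fromBlocks _ _).symm

theorem permCongr_dsum_of_zero (A : Matrix (Fin 0) (Fin 0) ℂ) (B : Matrix (Fin n) (Fin n) ℂ) :
    PermCongr (dsum A B) B :=
  (permCongr_dsum_fromBlocks A B).trans (permCongr_fromBlocks_of_isEmpty A B)

theorem dsum_mul (A A' : Matrix (Fin m) (Fin m) ℂ) (B B' : Matrix (Fin n) (Fin n) ℂ) :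
    dsum A B * dsum A' B' = dsum (A * A') (B * B') := by
  simp [dsum, fromBlocks_multiply]

theorem dsum_conjTranspose (A : Matrix (Fin m) (Fin m) ℂ) (B : Matrix (Fin n) (Fin n) ℂ) :
    (dsum A B)ᴴ = dsum Aᴴ Bᴴ := by
  simp [dsum, fromBlocks_conjTranspose]

theorem isUnit_dsum {A : Matrix (Fin m) (Fin m) ℂ} {B : Matrix (Fin n) (Fin n) ℂ}
    (hA : IsUnit A) (hB : IsUnit B) : IsUnit (dsum A B) := by
  rw [isUnit_iff_isUnit_det] at *
  simpa [dsum, det_fromBlocks_zero₂₁] using hA.mul hB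

end dsum

section finDsum

variable {γ : Type*} (g : ℕ → ℕ)
  (F : (k : ℕ) → γ → Matrix (Fin (g k)) (Fin (g k)) ℂ)

theorem permCongr_finDsum_of_eq {q : ℕ} {s s' : Fin q → ℕ} {c c' : Fin q → γ}
    (hs : s = s') (hc : c = c') :
    PermCongr (finDsum (fun i => g (s i)) fun i => F (s i) (c i))
      (finDsum (fun i => g (s' i)) fun i => F (s' i) (c' i)) := by
  subst hs hc
  exact .refl _

theorem permCongr_finDsum_comp_cast {q q' : ℕ} (h : q = q') (s : Fin q' → ℕ)
    (c : Fin q' → γ) :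
    PermCongr
      (finDsum (fun i => g (s (Fin.cast h i))) fun i => F (s (Fin.cast h i)) (c (Fin.cast h i)))
      (finDsum (fun i => g (s i)) fun i => F (s i) (c i)) := by
  subst h
  exact .refl _

theorem permCongr_finDsum_append : ∀ {q q' : ℕ} (s : Fin q → ℕ) (c : Fin q → γ)
    (s' : Fin q' → ℕ) (c' : Fin q' → γ),
    PermCongr
      (finDsum (fun i => g (Fin.append s s' i)) fun i => F (Fin.append s s' i) (Fin.append c c' i))
      (dsum (finDsum (fun i => g (s i)) fun i => F (s i) (c i))
        (finDsum (fun i => g (s' i)) fun i => F (s' i) (c' i)))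
  | 0, _, s, c, s', c' =>
    (permCongr_finDsum_of_eq g F (Fin.append_left_nil s s' rfl)
      (Fin.append_left_nil c c' rfl)).trans
      ((permCongr_finDsum_comp_cast g F _ s' c').trans (permCongr_dsum_of_zero _ _).symm)
  | q + 1, q', s, c, s', c' => by
    have hs : Fin.append s s' =
        Fin.cons (s 0) (Fin.append (Fin.tail s) s') ∘ Fin.cast (Nat.add_right_comm q 1 q') := by
      rw [← Fin.append_cons, Fin.cons_self_tail]
    have hc : Fin.append c c' =
        Fin.cons (c 0) (Fin.append (Fin.tail c) c') ∘ Fin.cast (Nat.add_right_comm q 1 q') := by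
      rw [← Fin.append_cons, Fin.cons_self_tail]
    refine (permCongr_finDsum_of_eq g F hs hc).trans <|
      (permCongr_finDsum_comp_cast g F (Nat.add_right_comm q 1 q')
        (Fin.cons (s 0) (Fin.append (Fin.tail s) s'))
        (Fin.cons (c 0) (Fin.append (Fin.tail c) c'))).trans ?_
    exact ((PermCongr.refl _).dsum
      (permCongr_finDsum_append (Fin.tail s) (Fin.tail c) s' c')).trans
        (permCongr_dsum_assoc _ _ _).symm

end finDsum

theorem permCongr_matWith_append (d e : StarData) (a : Fin d.n2 → ℂ) (a' : Fin e.n2 → ℂ)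
    (mu : Fin d.n3 → ℂ) (mu' : Fin e.n3 → ℂ) :
    PermCongr ((d.append e).matWith (Fin.append a a') (Fin.append mu mu'))
      (dsum (d.matWith a mu) (e.matWith a' mu')) :=
  ((permCongr_finDsum_append id (fun k (_ : Unit) => Jblock k 0) d.k (fun _ => ()) e.k
      (fun _ => ())).dsum
    ((permCongr_finDsum_append id (fun k α => α • Gamma k) d.l a e.l a').dsum
      (permCongr_finDsum_append (fun k => k + k) Hblock d.m mu e.m mu'))).trans
  (((PermCongr.refl _).dsum (permCongr_dsum_dsum_dsum_comm _ _ _ _)).trans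
    (permCongr_dsum_dsum_dsum_comm _ _ _ _))

theorem finSize_eq_sum : ∀ {q : ℕ} (s : Fin q → ℕ), finSize s = ∑ i, s i
  | 0, _ => rfl
  | _ + 1, s => by rw [Fin.sum_univ_succ, ← finSize_eq_sum]; rfl

theorem StarData.size_append (d e : StarData) : (d.append e).size = d.size + e.size := by
  simp only [StarData.size, StarData.append, finSize_eq_sum, Fin.sum_univ_add, Fin.append_left,
    Fin.append_right]
  ring

theorem finSize_size_eq_size_appendAll :
    ∀ {q : ℕ} (C : Fin q → StarData), finSize (fun i => (C i).size) = (appendAll C).size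
  | 0, _ => rfl
  | _ + 1, C => (congrArg ((C 0).size + ·) (finSize_size_eq_size_appendAll _)).trans
      (StarData.size_append _ _).symm

theorem conj_mem_starBundle_of_permCongr {d : StarData} {a : Fin d.n2 → ℂ}
    {mu : Fin d.n3 → ℂ} (hok : d.ParamsOK a mu) {P X : Matrix (Fin d.size) (Fin d.size) ℂ}
    (hP : IsUnit P)
    (hX : PermCongr X (d.matWith a mu)) : P * X * Pᴴ ∈ starBundle d := by
  obtain ⟨T, hT, rfl⟩ := hX.exists_conj
  exact ⟨a, mu, P * T, hP.mul hT, hok, by simp only [conjTranspose_mul, Matrix.mul_assoc]⟩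

theorem reindex_dsum_conj_mem_starBundle_append {d e : StarData} {a : Fin d.n2 → ℂ}
    {a' : Fin e.n2 → ℂ} {mu : Fin d.n3 → ℂ} {mu' : Fin e.n3 → ℂ}
    (hok : (d.append e).ParamsOK (Fin.append a a') (Fin.append mu mu'))
    {P : Matrix (Fin d.size) (Fin d.size) ℂ} {Q : Matrix (Fin e.size) (Fin e.size) ℂ}
    (hP : IsUnit P) (hQ : IsUnit Q) :
    reindex (finCongr (d.size_append e).symm) (finCongr (d.size_append e).symm)
        (dsum (P * d.matWith a mu * Pᴴ) (Q * e.matWith a' mu' * Qᴴ)) ∈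
      starBundle (d.append e) := by
  set σ := finCongr (d.size_append e).symm
  set R := reindexAlgEquiv ℂ ℂ σ
  have hconj : dsum (P * d.matWith a mu * Pᴴ) (Q * e.matWith a' mu' * Qᴴ) =
      dsum P Q * dsum (d.matWith a mu) (e.matWith a' mu') * (dsum P Q)ᴴ := by
    rw [dsum_conjTranspose, dsum_mul, dsum_mul]
  have hR : R (dsum P Q)ᴴ = (R (dsum P Q))ᴴ := by simp [R]
  rw [← coe_reindexAlgEquiv ℂ, hconj, map_mul, map_mul, hR]
  exact conj_mem_starBundle_of_permCongr hok ((isUnit_dsum hP hQ).map R)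
    ((permCongr_reindex σ _).trans (permCongr_matWith_append d e a a' mu mu').symm)

section continuity

variable {X : Type*} [TopologicalSpace X]

theorem Continuous.dsum {m n : ℕ} {A : X → Matrix (Fin m) (Fin m) ℂ}
    {B : X → Matrix (Fin n) (Fin n) ℂ} (hA : Continuous A) (hB : Continuous B) :
    Continuous fun x => dsum (A x) (B x) :=
  (hA.matrix_fromBlocks continuous_const continuous_const hB).matrix_reindex _ _

theorem Continuous.finDsum : ∀ {q : ℕ} {s : Fin q → ℕ}
    {M : X → (i : Fin q) → Matrix (Fin (s i)) (Fin (s i)) ℂ},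
    (∀ i, Continuous fun x => M x i) → Continuous fun x => finDsum s (M x)
  | 0, _, _, _ => continuous_const
  | _ + 1, _, _, hM => (hM 0).dsum (Continuous.finDsum fun i => hM i.succ)

theorem continuous_Jblock (k : ℕ) : Continuous (Jblock k) :=
  continuous_matrix fun i j => by
    simp only [Jblock, of_apply]
    exact continuous_if_const _ (fun _ => continuous_id') fun _ => continuous_const

theorem continuous_Hblock (k : ℕ) : Continuous (Hblock k) :=
  (continuous_const.matrix_fromBlocks continuous_const (continuous_Jblock k)
    continuous_const).matrix_reindex _ _

theorem Continuous.matWith (d : StarData) {a : X → Fin d.n2 → ℂ} {mu : X → Fin d.n3 → ℂ}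
    (ha : Continuous a) (hmu : Continuous mu) : Continuous fun x => d.matWith (a x) (mu x) :=
  continuous_const.dsum <|
    (Continuous.finDsum fun i => ((continuous_apply i).comp ha).smul continuous_const).dsum
      (Continuous.finDsum fun i => (continuous_Hblock _).comp ((continuous_apply i).comp hmu))

end continuity

theorem StarData.ParamsOK.mul_left {d : StarData} {a : Fin d.n2 → ℂ} {mu : Fin d.n3 → ℂ}
    (h : d.ParamsOK a mu) {ω : ℂ} (hω : ‖ω‖ = 1) {r : ℝ} (hr : 1 ≤ r) :
    d.ParamsOK (fun i => ω * a i) (fun i => r * mu i) := by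
  obtain ⟨ha, hmu, hsame, hdiff, hμ⟩ := h
  have hω2 : ω ^ 2 ≠ 0 := pow_ne_zero 2 (norm_ne_zero_iff.mp (by simp [hω]))
  have hr0 : (r : ℂ) ≠ 0 := Complex.ofReal_ne_zero.mpr (by linarith)
  refine ⟨fun i => by rw [norm_mul, hω, ha i, one_mul], fun i => ?_, fun i j hij => ?_,
    fun i j hij => ?_, fun i j => ?_⟩
  · rw [norm_mul, Complex.norm_real, Real.norm_of_nonneg (by linarith)]
    exact one_lt_mul_of_le_of_lt hr (hmu i)
  · simpa only [mul_pow, ne_eq, mul_right_inj' hω2] using hsame i j hij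
  · simpa only [mul_pow, ← mul_neg, ne_eq, mul_right_inj' hω2] using hdiff i j hij
  · simpa only [ne_eq, mul_right_inj' hr0] using hμ i j

theorem append_rel_iff_append_rel {α β : Type*} {n n' : ℕ} {C : β → β → Prop}
    {R : α → α → Prop} (hR : ∀ u v, R u v → R v u) {l : Fin n → β} {l' : Fin n' → β}
    {x y : Fin n → α} {x' y' : Fin n' → α}
    (h : ∀ i j, C (l i) (l j) → (R (x i) (x j) ↔ R (y i) (y j)))
    (h' : ∀ i j, C (l' i) (l' j) → (R (x' i) (x' j) ↔ R (y' i) (y' j)))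
    (hx : ∀ i j, R (x i) (x' j)) (hy : ∀ i j, R (y i) (y' j)) (i j : Fin (n + n')) :
    C (Fin.append l l' i) (Fin.append l l' j) →
      (R (Fin.append x x' i) (Fin.append x x' j) ↔
        R (Fin.append y y' i) (Fin.append y y' j)) := by
  induction i using Fin.addCases <;> induction j using Fin.addCases <;>
    simp only [Fin.append_left, Fin.append_right]
  · exact h _ _
  · exact fun _ => iff_of_true (hx _ _) (hy _ _)
  · exact fun _ => iff_of_true (hR _ _ (hx _ _)) (hR _ _ (hy _ _))
  · exact h' _ _

theorem StarData.ParamsOK.append {d e : StarData} {a : Fin d.n2 → ℂ} {mu : Fin d.n3 → ℂ}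
    {a' : Fin e.n2 → ℂ} {mu' : Fin e.n3 → ℂ} (hd : d.ParamsOK a mu) (he : e.ParamsOK a' mu')
    (hSG2 : Disjoint d.SG2 e.SG2) (hSG2neg : Disjoint d.SG2 e.SG2neg) (hSH : Disjoint d.SH e.SH)
    (ha : ∀ i j, a i ^ 2 ≠ a' j ^ 2 ∧ a i ^ 2 ≠ -(a' j ^ 2))
    (hmu : ∀ i j, mu i ≠ mu' j) :
    (d.append e).ParamsOK (Fin.append a a') (Fin.append mu mu') := by
  obtain ⟨hn, hm, hsame, hdiff, hμ⟩ := hd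
  obtain ⟨hn', hm', hsame', hdiff', hμ'⟩ := he
  refine ⟨(Fin.forall_fin_add _).2 ⟨by simpa using hn, by simpa using hn'⟩,
    (Fin.forall_fin_add _).2 ⟨by simpa using hm, by simpa using hm'⟩,
    append_rel_iff_append_rel (C := fun u v => u % 2 = v % 2) (R := fun u v => u ^ 2 ≠ v ^ 2)
      (fun u v => Ne.symm) hsame hsame' (fun i j => (ha i j).1)
      fun i j => hSG2.ne_of_mem ⟨i, rfl⟩ ⟨j, rfl⟩,
    append_rel_iff_append_rel (C := fun u v => u % 2 ≠ v % 2) (R := fun u v => u ^ 2 ≠ -(v ^ 2))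
      (fun u v huv h => huv (by linear_combination h)) hdiff hdiff'
      (fun i j => (ha i j).2) fun i j => hSG2neg.ne_of_mem ⟨i, rfl⟩ ⟨j, rfl⟩,
    fun i j => append_rel_iff_append_rel (C := fun _ _ => True) (R := (· ≠ ·))
      (l := mu) (l' := mu')
      (fun u v => Ne.symm) (fun i j _ => hμ i j) (fun i j _ => hμ' i j) hmu
      (fun i j => hSH.ne_of_mem ⟨i, rfl⟩ ⟨j, rfl⟩) i j trivial⟩

theorem eventually_ne_of_injOn_Ioo {X : Type*} {f : ℝ → X} {ε : ℝ} (hε : 0 < ε)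
    (hf : Set.InjOn f (Set.Ioo 0 ε)) (w : X) : ∀ᶠ θ in 𝓝[>] 0, f θ ≠ w := by
  by_cases hw : ∃ θ₀ ∈ Set.Ioo 0 ε, f θ₀ = w
  · obtain ⟨θ₀, hθ₀, rfl⟩ := hw
    filter_upwards [Ioo_mem_nhdsGT hθ₀.1] with θ hθ hfθ
    exact hθ.2.ne (hf ⟨hθ.1, hθ.2.trans hθ₀.2⟩ hθ₀ hfθ)
  · filter_upwards [Ioo_mem_nhdsGT hε] with θ hθ hfθ
    exact hw ⟨θ, hθ, hfθ⟩

theorem injOn_exp_mul_I_mul_sq {b : ℂ} (hb : b ≠ 0) :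
    Set.InjOn (fun θ : ℝ => (Complex.exp (θ * Complex.I) * b) ^ 2) (Set.Ioo 0 Real.pi) := by
  intro x hx y hy hxy
  have hsq (t : ℝ) : (Circle.exp (2 * t) : ℂ) = Complex.exp (t * Complex.I) ^ 2 := by
    rw [Circle.coe_exp, sq, ← Complex.exp_add]
    push_cast
    ring_nf
  have hexp : Circle.exp (2 * x) = Circle.exp (2 * y) := by
    ext
    simpa [hsq, mul_pow, pow_ne_zero 2 hb] using hxy
  have := Circle.exp_injOn_Ico (a := 0) (b := 2 * Real.pi) (by simp)
    ⟨by linarith [hx.1], by linarith [hx.2]⟩ ⟨by linarith [hy.1], by linarith [hy.2]⟩ hexp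
  linarith

theorem StarData.eventually_paramsOK_append {d e : StarData} (hSG2 : Disjoint d.SG2 e.SG2)
    (hSG2neg : Disjoint d.SG2 e.SG2neg) (hSH : Disjoint d.SH e.SH) {a : Fin d.n2 → ℂ}
    {mu : Fin d.n3 → ℂ} {a' : Fin e.n2 → ℂ} {mu' : Fin e.n3 → ℂ} (hd : d.ParamsOK a mu)
    (he : e.ParamsOK a' mu') :
    ∀ᶠ θ : ℝ in 𝓝[>] 0, (d.append e).ParamsOK
      (Fin.append a fun j => Complex.exp (θ * Complex.I) * a' j)
      (Fin.append mu fun j => ((1 + θ : ℝ) : ℂ) * mu' j) := by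
  have ha' j : a' j ≠ 0 := norm_ne_zero_iff.mp (by simp [he.1 j])
  have hmu' j : mu' j ≠ 0 := norm_ne_zero_iff.mp (zero_lt_one.trans (he.2.1 j)).ne'
  have hrot i j (s : ℂ) : ∀ᶠ θ : ℝ in 𝓝[>] 0,
      (Complex.exp (θ * Complex.I) * a' j) ^ 2 ≠ s * a i ^ 2 :=
    eventually_ne_of_injOn_Ioo Real.pi_pos (injOn_exp_mul_I_mul_sq (ha' j)) _
  have hscale i j : ∀ᶠ θ : ℝ in 𝓝[>] 0, ((1 + θ : ℝ) : ℂ) * mu' j ≠ mu i := by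
    refine eventually_ne_of_injOn_Ioo one_pos (fun x _ y _ hxy => ?_) _
    simpa using mul_right_cancel₀ (hmu' j) hxy
  have hmix : ∀ᶠ θ : ℝ in 𝓝[>] 0,
      (∀ i j, a i ^ 2 ≠ (Complex.exp (θ * Complex.I) * a' j) ^ 2 ∧
        a i ^ 2 ≠ -((Complex.exp (θ * Complex.I) * a' j) ^ 2)) ∧
      ∀ i j, mu i ≠ ((1 + θ : ℝ) : ℂ) * mu' j := by
    simp only [eventually_and, eventually_all]
    refine ⟨fun i j => ⟨?_, ?_⟩, fun i j => (hscale i j).mono fun _ h => h.symm⟩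
    · filter_upwards [hrot i j 1] with θ h
      simpa [eq_comm] using h
    · filter_upwards [hrot i j (-1)] with θ h h'
      exact h (by rw [h']; ring)
  filter_upwards [hmix, self_mem_nhdsWithin] with θ ⟨ha, hmu⟩ (hθ : 0 < θ)
  exact hd.append (he.mul_left (Complex.norm_exp_ofReal_mul_I θ) (by linarith)) hSG2 hSG2neg hSH
    ha hmu

theorem reindex_dsum_mem_closure_starBundle_append_of_mem {d e : StarData}
    (hSG2 : Disjoint d.SG2 e.SG2) (hSG2neg : Disjoint d.SG2 e.SG2neg) (hSH : Disjoint d.SH e.SH)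
    {A : Matrix (Fin d.size) (Fin d.size) ℂ} {B : Matrix (Fin e.size) (Fin e.size) ℂ}
    (hA : A ∈ starBundle d) (hB : B ∈ starBundle e) :
    reindex (finCongr (d.size_append e).symm) (finCongr (d.size_append e).symm) (dsum A B) ∈
      closure (starBundle (d.append e)) := by
  obtain ⟨a, mu, P, hP, hd, rfl⟩ := hA
  obtain ⟨a', mu', Q, hQ, he, rfl⟩ := hB
  let G (θ : ℝ) := reindex (finCongr (d.size_append e).symm) (finCongr (d.size_append e).symm)
    (dsum (P * d.matWith a mu * Pᴴ) (Q * e.matWith (fun j => Complex.exp (θ * Complex.I) * a' j)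
      (fun j => ((1 + θ : ℝ) : ℂ) * mu' j) * Qᴴ))
  have hG : Continuous G :=
    (continuous_const.dsum ((continuous_const.matrix_mul (Continuous.matWith e (by fun_prop)
      (by fun_prop))).matrix_mul continuous_const)).matrix_reindex _ _
  have hG0 : G 0 = reindex (finCongr (d.size_append e).symm) (finCongr (d.size_append e).symm)
      (dsum (P * d.matWith a mu * Pᴴ) (Q * e.matWith a' mu' * Qᴴ)) := by
    simp [G]
  rw [← hG0]
  refine mem_closure_of_tendsto ((hG.tendsto 0).mono_left (nhdsWithin_le_nhds (s := Set.Ioi 0))) ?_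
  filter_upwards [StarData.eventually_paramsOK_append hSG2 hSG2neg hSH hd he] with θ hθ
  exact reindex_dsum_conj_mem_starBundle_append hθ hP hQ

theorem reindex_dsum_mem_closure_starBundle_append {d e : StarData}
    (hSG2 : Disjoint d.SG2 e.SG2) (hSG2neg : Disjoint d.SG2 e.SG2neg) (hSH : Disjoint d.SH e.SH)
    {A : Matrix (Fin d.size) (Fin d.size) ℂ} {B : Matrix (Fin e.size) (Fin e.size) ℂ}
    (hA : A ∈ closure (starBundle d)) (hB : B ∈ closure (starBundle e)) :
    reindex (finCongr (d.size_append e).symm) (finCongr (d.size_append e).symm) (dsum A B) ∈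
      closure (starBundle (d.append e)) :=
  closure_closure (s := starBundle (d.append e)) ▸
    map_mem_closure₂ (f := fun A B => reindex (finCongr (d.size_append e).symm)
        (finCongr (d.size_append e).symm) (dsum A B))
      ((continuous_fst.dsum continuous_snd).matrix_reindex _ _) hA hB
      fun _ hA _ hB => reindex_dsum_mem_closure_starBundle_append_of_mem hSG2 hSG2neg hSH hA hB

theorem range_append {α : Type*} {n n' : ℕ} (u : Fin n → α) (v : Fin n' → α) :
    Set.range (Fin.append u v) = Set.range u ∪ Set.range v := by
  ext x
  constructor
  · rintro ⟨i, rfl⟩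
    induction i using Fin.addCases <;> simp
  · rintro (⟨i, rfl⟩ | ⟨i, rfl⟩)
    exacts [⟨_, Fin.append_left u v i⟩, ⟨_, Fin.append_right u v i⟩]

theorem range_a_appendAll : ∀ {q : ℕ} (C : Fin q → StarData),
    Set.range (appendAll C).a = ⋃ i, Set.range (C i).a
  | 0, _ => by simp [appendAll]
  | _ + 1, C => by
    rw [Set.iUnion_fin_add_one_eq_iUnion_succ, Function.comp_def, ← range_a_appendAll]
    exact range_append _ _

theorem range_mu_appendAll : ∀ {q : ℕ} (C : Fin q → StarData),
    Set.range (appendAll C).mu = ⋃ i, Set.range (C i).mu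
  | 0, _ => by simp [appendAll]
  | _ + 1, C => by
    rw [Set.iUnion_fin_add_one_eq_iUnion_succ, Function.comp_def, ← range_mu_appendAll]
    exact range_append _ _

theorem SG2_appendAll {q : ℕ} (C : Fin q → StarData) :
    (appendAll C).SG2 = ⋃ i, (C i).SG2 := by
  simpa [StarData.SG2, ← Set.range_comp, Set.image_iUnion, Function.comp_def] using
    congrArg (Set.image (· ^ 2)) (range_a_appendAll C)

theorem SG2neg_appendAll {q : ℕ} (C : Fin q → StarData) :
    (appendAll C).SG2neg = ⋃ i, (C i).SG2neg := by
  simpa [StarData.SG2neg, ← Set.range_comp, Set.image_iUnion, Function.comp_def] using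
    congrArg (Set.image fun z => -(z ^ 2)) (range_a_appendAll C)

theorem SH_appendAll {q : ℕ} (C : Fin q → StarData) : (appendAll C).SH = ⋃ i, (C i).SH :=
  range_mu_appendAll C

theorem disjoint_iUnion_succ {α : Type*} {q : ℕ} {S T : Fin (q + 1) → Set α}
    (h : Pairwise fun i j => Disjoint (S i) (T j)) : Disjoint (S 0) (⋃ i : Fin q, T i.succ) :=
  Set.disjoint_iUnion_right.2 fun i => h (Fin.succ_ne_zero i).symm

theorem reindex_dsum_reindex {m n n' t : ℕ} (h : n = n') (h' : m + n' = t) (h'' : m + n = t)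
    (A : Matrix (Fin m) (Fin m) ℂ) (X : Matrix (Fin n) (Fin n) ℂ) :
    reindex (finCongr h') (finCongr h') (dsum A (reindex (finCongr h) (finCongr h) X)) =
      reindex (finCongr h'') (finCongr h'') (dsum A X) := by
  subst h
  rfl

theorem finDsum_mem_closure_starBundle_appendAll : ∀ {q : ℕ} (C : Fin q → StarData)
    (A : (i : Fin q) → Matrix (Fin (C i).size) (Fin (C i).size) ℂ),
    (∀ i, A i ∈ closure (starBundle (C i))) →
    Pairwise (fun i j => Disjoint (C i).SG2 (C j).SG2) →
    Pairwise (fun i j => Disjoint (C i).SG2 (C j).SG2neg) →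
    Pairwise (fun i j => Disjoint (C i).SH (C j).SH) →
    reindex (finCongr (finSize_size_eq_size_appendAll C))
        (finCongr (finSize_size_eq_size_appendAll C)) (finDsum (fun i => (C i).size) A) ∈
      closure (starBundle (appendAll C))
  | 0, _, _, _, _, _, _ => subset_closure
      ⟨Fin.elim0, Fin.elim0, 1, isUnit_one, by simp [appendAll, StarData.ParamsOK],
        Matrix.ext fun i => i.elim0⟩
  | _ + 1, C, A, hA, hSG2, hSG2neg, hSH => by
    have hrest := finDsum_mem_closure_starBundle_appendAll (fun i => C i.succ) (fun i => A i.succ)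
      (fun i => hA i.succ) (hSG2.comp_of_injective (Fin.succ_injective _))
      (hSG2neg.comp_of_injective (Fin.succ_injective _))
      (hSH.comp_of_injective (Fin.succ_injective _))
    have := reindex_dsum_mem_closure_starBundle_append
      (by rw [SG2_appendAll]; exact disjoint_iUnion_succ hSG2)
      (by rw [SG2neg_appendAll]; exact disjoint_iUnion_succ hSG2neg)
      (by rw [SH_appendAll]; exact disjoint_iUnion_succ hSH)
      (hA 0) hrest
    rwa [reindex_dsum_reindex] at this

theorem dsum_mem_closure_starBundle_of_mem_closure_general (q : ℕ) (C : Fin q → StarData)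
    (A : (i : Fin q) → Matrix (Fin (C i).size) (Fin (C i).size) ℂ)
    (hA : ∀ i, A i ∈ closure (starBundle (C i)))
    (hdisj1 : ∀ i j, i ≠ j → (C i).SG2 ∩ (C j).SG2 = ∅)
    (hdisj2 : ∀ i j, i ≠ j → (C i).SG2 ∩ (C j).SG2neg = ∅)
    (hdisj3 : ∀ i j, i ≠ j → (C i).SH ∩ (C j).SH = ∅) :
    ∃ hsz : finSize (fun i => (C i).size) = (appendAll C).size,
      Matrix.reindex (finCongr hsz) (finCongr hsz) (finDsum (fun i => (C i).size) A) ∈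
        closure (starBundle (appendAll C)) :=
  ⟨finSize_size_eq_size_appendAll C, finDsum_mem_closure_starBundle_appendAll C A hA
    (fun i j hij => Set.disjoint_iff_inter_eq_empty.2 (hdisj1 i j hij))
    (fun i j hij => Set.disjoint_iff_inter_eq_empty.2 (hdisj2 i j hij))
    (fun i j hij => Set.disjoint_iff_inter_eq_empty.2 (hdisj3 i j hij))⟩

/-- **Lemma 3.5.**  If `A_i` belongs to the closure of `ℬ*(C_i)` and the parameter sets
of the `C_i` satisfy the disjointness conditions, then `A_1 ⊕ ⋯ ⊕ A_q` belongs to the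
closure of `ℬ*(C_1 ⊕ ⋯ ⊕ C_q)`. -/
theorem dsum_mem_closure_starBundle_of_mem_closure (q : ℕ) (C : Fin q → StarData)
    (hC : ∀ i, (C i).Valid)
    (A : (i : Fin q) → Matrix (Fin (C i).size) (Fin (C i).size) ℂ)
    (hA : ∀ i, A i ∈ closure (starBundle (C i)))
    (hdisj1 : ∀ i j, i ≠ j → (C i).SG2 ∩ (C j).SG2 = ∅)
    (hdisj2 : ∀ i j, i ≠ j → (C i).SG2 ∩ (C j).SG2neg = ∅)
    (hdisj3 : ∀ i j, i ≠ j → (C i).SH ∩ (C j).SH = ∅) :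
    ∃ hsz : finSize (fun i => (C i).size) = (appendAll C).size,
      Matrix.reindex (finCongr hsz) (finCongr hsz) (finDsum (fun i => (C i).size) A) ∈
        closure (starBundle (appendAll C)) :=
  dsum_mem_closure_starBundle_of_mem_closure_general q C A hA hdisj1 hdisj2 hdisj3
end
end

section
/- (Lemma 3.8(ii), congruence case.) Let k ≥ 1 and μ ∈ ℂ with 0 ≠ μ ≠ (−1)^{k+1}. Then H_{2k}(μ) belongs to the closure of the set { P (H_2(μ̃_1) ⊕ ⋯ ⊕ H_2(μ̃_k)) Pᵀ : P ∈ ℂ^{2k×2k} invertible, each μ̃_i satisfies |μ̃_i| > 1 or μ̃_i = e^{iθ} with 0 < θ < π, and μ̃_i ≠ μ̃_{i'} for i ≠ i' }. -/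
open Matrix

noncomputable section

/-- The `2 × 2` block `H_2(μ) = [[0, 1], [μ, 0]]`. -/
def H2 (μ : ℂ) : Matrix (Fin 2) (Fin 2) ℂ := !![0, 1; μ, 0]

/-- The block-diagonal direct sum `H_2(μ_1) ⊕ ⋯ ⊕ H_2(μ_r)`. -/
def pairH (r : ℕ) (mu : Fin r → ℂ) :
    Matrix (Fin (finSize fun _ : Fin r => 2)) (Fin (finSize fun _ : Fin r => 2)) ℂ :=
  finDsum (fun _ => 2) fun i => H2 (mu i)

/-- A complex number `μ` is a valid Type II-(a) parameter when `|μ| > 1` or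
`μ = e^(iθ)` with `0 < θ < π`. -/
def TypeIIaParam (μ : ℂ) : Prop :=
  1 < ‖μ‖ ∨ ∃ θ : ℝ, 0 < θ ∧ θ < Real.pi ∧ μ = Complex.exp ((θ : ℂ) * Complex.I)


/-!
Perturb the diagonal of `J_k(μ)` to `μρ, μρ², …, μρᵏ` with real `ρ → 1`, from above if
`‖μ‖ ≥ 1` and from below otherwise, so that these eigenvalues are pairwise distinct and all lie
strictly on one side of the unit circle. With distinct eigenvalues the perturbed block `C` is
diagonalizable, `C = T D T⁻¹`, and `diag(T⁻ᵀ, T)` is a congruence from `[[0, I], [D, 0]]` to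
`[[0, I], [C, 0]]`; up to a permutation, `[[0, I], [D, 0]]` is `⊕ H₂(λᵢ)`. Finally
`H₂(λ) = H₂(λ) H₂(λ⁻¹) H₂(λ)ᵀ`, so when the `λᵢ` lie inside the unit disc, inverting all of
them gives pairwise distinct parameters of modulus `> 1`.
-/

namespace Matrix

theorem reindex_reindex {l m n α : Type*} (e₁ : l ≃ m) (e₂ : m ≃ n) (A : Matrix l l α) :
    reindex e₂ e₂ (reindex e₁ e₁ A) = reindex (e₁.trans e₂) (e₁.trans e₂) A := by
  rw [← Equiv.trans_apply, reindex_trans]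

variable {n : Type*} [Fintype n] [DecidableEq n]

section Congruent

variable {R : Type*} [CommRing R]

def Congruent (A B : Matrix n n R) : Prop :=
  ∃ P : Matrix n n R, IsUnit P ∧ A = P * B * Pᵀ

theorem Congruent.refl (A : Matrix n n R) : A.Congruent A :=
  ⟨1, isUnit_one, by simp⟩

theorem Congruent.trans {A B C : Matrix n n R} (hAB : A.Congruent B) (hBC : B.Congruent C) :
    A.Congruent C := by
  obtain ⟨P, hP, rfl⟩ := hAB
  obtain ⟨Q, hQ, rfl⟩ := hBC
  exact ⟨P * Q, hP.mul hQ, by simp only [transpose_mul, Matrix.mul_assoc]⟩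

theorem Congruent.reindex {m : Type*} [Fintype m] [DecidableEq m] {A B : Matrix m m R}
    (e : m ≃ n) (h : A.Congruent B) : (Matrix.reindex e e A).Congruent (Matrix.reindex e e B) := by
  obtain ⟨P, hP, rfl⟩ := h
  refine ⟨Matrix.reindex e e P, hP.map (reindexAlgEquiv R R e), ?_⟩
  simp only [reindex_apply, transpose_submatrix, submatrix_mul_equiv]

theorem isUnit_permMatrix (σ : Equiv.Perm n) : IsUnit (σ.permMatrix R) := by
  rw [isUnit_iff_isUnit_det, det_permutation]
  exact (Equiv.Perm.sign σ).isUnit.map (Int.castRingHom R)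

theorem congruent_reindex_reindex {m : Type*} (e e' : m ≃ n) (A : Matrix m m R) :
    (Matrix.reindex e e A).Congruent (Matrix.reindex e' e' A) := by
  refine ⟨Equiv.Perm.permMatrix R (e.symm.trans e'), isUnit_permMatrix _, ?_⟩
  rw [transpose_permMatrix]
  ext i j
  simp [PEquiv.toMatrix_toPEquiv_mul, PEquiv.mul_toMatrix_toPEquiv, Equiv.Perm.inv_def]

theorem Congruent.blockDiagonal {o : Type*} [Fintype o] [DecidableEq o]
    {A B : o → Matrix n n R} (h : ∀ i, (A i).Congruent (B i)) :
    (Matrix.blockDiagonal A).Congruent (Matrix.blockDiagonal B) := by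
  choose P hP hAB using h
  refine ⟨Matrix.blockDiagonal P, (Pi.isUnit_iff.mpr hP).map (blockDiagonalRingHom n o R), ?_⟩
  rw [blockDiagonal_transpose, ← blockDiagonal_mul, ← blockDiagonal_mul]
  exact congrArg _ (funext hAB)

theorem congruent_fromBlocks_zero_one_of_eq_mul_mul_inv {C D T : Matrix n n R} (hT : IsUnit T)
    (hC : C = T * D * T⁻¹) : (fromBlocks 0 1 C 0).Congruent (fromBlocks 0 1 D 0) := by
  rw [isUnit_iff_isUnit_det] at hT
  refine ⟨fromBlocks (T⁻¹)ᵀ 0 0 T, ?_, ?_⟩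
  · rw [isUnit_iff_isUnit_det, det_fromBlocks_zero₂₁, det_transpose]
    exact (isUnit_nonsing_inv_det T hT).mul hT
  · have hTt : IsUnit Tᵀ.det := by rwa [det_transpose]
    rw [fromBlocks_transpose, fromBlocks_multiply, fromBlocks_multiply]
    simp [hC, transpose_nonsing_inv, nonsing_inv_mul _ hTt]

end Congruent

section Diagonalization

variable {K : Type*} [Field K]

theorem exists_eq_mul_diagonal_mul_inv {C : Matrix n n K} {d : n → K}
    (hd : Function.Injective d) (hC : ∀ i, (C - diagonal fun _ => d i).det = 0) :
    ∃ T : Matrix n n K, IsUnit T ∧ C = T * diagonal d * T⁻¹ := by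
  choose v hv0 hv using fun i => exists_mulVec_eq_zero_iff.mpr (hC i)
  have heig : ∀ i, C *ᵥ v i = d i • v i := fun i => by
    simpa [sub_mulVec, sub_eq_zero, mulVec_diagonal, funext_iff] using hv i
  have hli : LinearIndependent K v :=
    Module.End.eigenvectors_linearIndependent' (toLin' C) d hd v fun i =>
      Module.End.hasEigenvector_iff.mpr ⟨Module.End.mem_eigenspace_iff.mpr (heig i), hv0 i⟩
  set T : Matrix n n K := (of v)ᵀ
  have hT : IsUnit T := linearIndependent_cols_iff_isUnit.mp hli
  have hCT : C * T = T * diagonal d := by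
    ext a i
    rw [mul_diagonal, mul_comm]
    exact congrFun (heig i) a
  refine ⟨T, hT, ?_⟩
  rw [← hCT, mul_nonsing_inv_cancel_right _ _ ((isUnit_iff_isUnit_det T).mp hT)]

theorem IsUpperTriangular.exists_eq_mul_diagonal_mul_inv [LinearOrder n] {C : Matrix n n K}
    (hC : C.IsUpperTriangular) (hd : Function.Injective C.diag) :
    ∃ T : Matrix n n K, IsUnit T ∧ C = T * diagonal C.diag * T⁻¹ :=
  Matrix.exists_eq_mul_diagonal_mul_inv hd fun i => by
    rw [det_of_isUpperTriangular (hC.sub (blockTriangular_diagonal _))]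
    exact Finset.prod_eq_zero (Finset.mem_univ i) (by simp)

end Diagonalization

end Matrix

def finTwoProdEquivSum (n : Type*) : Fin 2 × n ≃ n ⊕ n :=
  (finTwoEquiv.prodCongr (Equiv.refl n)).trans (Equiv.boolProdEquivSum n)

theorem reindex_blockDiagonal_H2 {n : Type*} [DecidableEq n] (d : n → ℂ) :
    reindex (finTwoProdEquivSum n) (finTwoProdEquivSum n) (blockDiagonal fun i => H2 (d i)) =
      fromBlocks 0 1 (diagonal d) 0 := by
  ext (i | i) (j | j) <;>
    simp [finTwoProdEquivSum, blockDiagonal_apply, H2, diagonal_apply, one_apply, finTwoEquiv]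

def finProdSuccEquiv (m q : ℕ) : Fin m × Fin (q + 1) ≃ Fin m ⊕ Fin m × Fin q :=
  ((Equiv.refl _).prodCongr (finSuccEquiv q)).trans <| (Equiv.prodComm _ _).trans <|
    optionProdEquiv.trans <| Equiv.sumCongr (Equiv.refl _) (Equiv.prodComm _ _)

theorem reindex_finProdSuccEquiv_blockDiagonal {m q : ℕ}
    (M : Fin (q + 1) → Matrix (Fin m) (Fin m) ℂ) :
    reindex (finProdSuccEquiv m q) (finProdSuccEquiv m q) (blockDiagonal M) =
      fromBlocks (M 0) 0 0 (blockDiagonal fun i => M i.succ) := by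
  ext (a | ⟨a, i⟩) (b | ⟨b, j⟩) <;>
    simp [finProdSuccEquiv, blockDiagonal_apply, optionProdEquiv, Fin.succ_ne_zero,
      fun j : Fin q => (Fin.succ_ne_zero j).symm]

theorem dsum_reindex {m n : ℕ} {ι : Type*} (A : Matrix (Fin m) (Fin m) ℂ) (B : Matrix ι ι ℂ)
    (e : ι ≃ Fin n) :
    dsum A (reindex e e B) =
      reindex ((Equiv.sumCongr (Equiv.refl _) e).trans finSumFinEquiv)
        ((Equiv.sumCongr (Equiv.refl _) e).trans finSumFinEquiv) (fromBlocks A 0 0 B) := by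
  have hblocks : fromBlocks A 0 0 (reindex e e B) =
      reindex (Equiv.sumCongr (Equiv.refl _) e) (Equiv.sumCongr (Equiv.refl _) e)
        (fromBlocks A 0 0 B) := by
    ext (i | i) (j | j) <;> simp
  rw [dsum, hblocks, reindex_reindex]

theorem exists_finDsum_eq_reindex_blockDiagonal {m : ℕ} :
    ∀ {q : ℕ} (M : Fin q → Matrix (Fin m) (Fin m) ℂ),
      ∃ e : Fin m × Fin q ≃ Fin (finSize fun _ : Fin q => m),
        finDsum (fun _ => m) M = reindex e e (blockDiagonal M)
  | 0, _ => ⟨(Equiv.equivOfIsEmpty _ (Fin 0) : _),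
      Subsingleton.elim (α := Matrix (Fin 0) (Fin 0) ℂ) _ _⟩
  | q + 1, M => by
    obtain ⟨e, he⟩ := exists_finDsum_eq_reindex_blockDiagonal fun i => M i.succ
    refine ⟨(finProdSuccEquiv m q).trans
      ((Equiv.sumCongr (Equiv.refl _) e).trans finSumFinEquiv), ?_⟩
    change dsum (M 0) (finDsum (fun _ => m) fun i => M i.succ) = _
    rw [he, dsum_reindex, ← reindex_finProdSuccEquiv_blockDiagonal, reindex_reindex]
    rfl

theorem finSize_two (k : ℕ) : finSize (fun _ : Fin k => 2) = k + k := by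
  induction k with
  | zero => rfl
  | succ q ih => show 2 + finSize (fun _ : Fin q => 2) = _; omega

theorem congruent_H2_inv {d : ℂ} (hd : d ≠ 0) : (H2 d).Congruent (H2 d⁻¹) := by
  refine ⟨H2 d, ?_, ?_⟩
  · simp [isUnit_iff_isUnit_det, H2, det_fin_two_of, hd]
  · ext i j
    fin_cases i <;> fin_cases j <;> simp [H2, mul_apply, Fin.sum_univ_two, hd]

def HblockOf {k : ℕ} (C : Matrix (Fin k) (Fin k) ℂ) : Matrix (Fin (k + k)) (Fin (k + k)) ℂ :=
  reindex finSumFinEquiv finSumFinEquiv (fromBlocks 0 1 C 0)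

theorem HblockOf_congruent_pairH {k : ℕ} {C : Matrix (Fin k) (Fin k) ℂ}
    (hC : C.IsUpperTriangular) (hd : Function.Injective C.diag) {ν : Fin k → ℂ}
    (hν : ∀ i, (H2 (C i i)).Congruent (H2 (ν i))) :
    (HblockOf C).Congruent
      (reindex (finCongr (finSize_two k)) (finCongr (finSize_two k)) (pairH k ν)) := by
  obtain ⟨T, hT, hCT⟩ := hC.exists_eq_mul_diagonal_mul_inv hd
  obtain ⟨e, he⟩ := exists_finDsum_eq_reindex_blockDiagonal fun i => H2 (ν i)
  have hdiag := (congruent_fromBlocks_zero_one_of_eq_mul_mul_inv hT hCT).reindex finSumFinEquiv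
  rw [← reindex_blockDiagonal_H2, reindex_reindex] at hdiag
  refine hdiag.trans (((Congruent.blockDiagonal hν).reindex _).trans ?_)
  rw [pairH, he, reindex_reindex]
  exact congruent_reindex_reindex _ _ _

def typeIIaPairBundle (k : ℕ) : Set (Matrix (Fin (k + k)) (Fin (k + k)) ℂ) :=
  {A | ∃ ν : Fin k → ℂ, (∀ i, TypeIIaParam (ν i)) ∧ Function.Injective ν ∧
    A.Congruent (reindex (finCongr (finSize_two k)) (finCongr (finSize_two k)) (pairH k ν))}

theorem HblockOf_mem_typeIIaPairBundle {k : ℕ} {C : Matrix (Fin k) (Fin k) ℂ}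
    (hC : C.IsUpperTriangular) (hd : Function.Injective C.diag)
    (hnorm : (∀ i, 1 < ‖C i i‖) ∨ ∀ i, 0 < ‖C i i‖ ∧ ‖C i i‖ < 1) :
    HblockOf C ∈ typeIIaPairBundle k := by
  rcases hnorm with h | h
  · exact ⟨C.diag, fun i => .inl (h i), hd, HblockOf_congruent_pairH hC hd fun i => .refl _⟩
  · refine ⟨fun i => (C i i)⁻¹, fun i => .inl ?_, inv_injective.comp hd,
      HblockOf_congruent_pairH hC hd fun i => congruent_H2_inv (norm_pos_iff.mp (h i).1)⟩
    rw [norm_inv]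
    exact (one_lt_inv₀ (h i).1).mpr (h i).2

theorem Jblock_isUpperTriangular (k : ℕ) (μ : ℂ) : (Jblock k μ).IsUpperTriangular := by
  intro i j (hij : j < i)
  simp only [Jblock, of_apply]
  split_ifs <;> first | rfl | omega

def geomJblock (k : ℕ) (μ : ℂ) (ρ : ℝ) : Matrix (Fin k) (Fin k) ℂ :=
  Jblock k μ + diagonal fun i : Fin k => μ * ((ρ : ℂ) ^ ((i : ℕ) + 1) - 1)

theorem geomJblock_apply_self (k : ℕ) (μ : ℂ) (ρ : ℝ) (i : Fin k) :
    geomJblock k μ ρ i i = μ * (ρ : ℂ) ^ ((i : ℕ) + 1) := by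
  simp only [geomJblock, Jblock, Matrix.add_apply, of_apply, ↓reduceIte, diagonal_apply_eq]
  ring

theorem HblockOf_geomJblock_mem (k : ℕ) {μ : ℂ} (hμ : μ ≠ 0) {ρ : ℝ} (hρ0 : 0 < ρ)
    (hside : 1 ≤ ‖μ‖ ∧ 1 < ρ ∨ ‖μ‖ < 1 ∧ ρ < 1) :
    HblockOf (geomJblock k μ ρ) ∈ typeIIaPairBundle k := by
  have hρ1 : ρ ≠ 1 := by rcases hside with ⟨-, h⟩ | ⟨-, h⟩ <;> [exact h.ne'; exact h.ne]
  have hnorm (i : Fin k) : ‖geomJblock k μ ρ i i‖ = ‖μ‖ * ρ ^ ((i : ℕ) + 1) := by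
    rw [geomJblock_apply_self, norm_mul, norm_pow, Complex.norm_real, Real.norm_of_nonneg hρ0.le]
  refine HblockOf_mem_typeIIaPairBundle
    ((Jblock_isUpperTriangular k μ).add (blockTriangular_diagonal _)) (fun i j hij => ?_) ?_
  · have hpow : (ρ : ℂ) ^ ((i : ℕ) + 1) = (ρ : ℂ) ^ ((j : ℕ) + 1) :=
      mul_left_cancel₀ hμ (by simpa only [diag, geomJblock_apply_self] using hij)
    norm_cast at hpow
    have := (pow_right_injective₀ hρ0 hρ1).eq_iff.mp hpow
    exact Fin.ext (by omega)
  · simp only [hnorm]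
    rcases hside with ⟨hμ1, hρ⟩ | ⟨hμ1, hρ⟩
    · exact .inl fun i => one_lt_mul_of_le_of_lt hμ1 (one_lt_pow₀ hρ (by omega))
    · exact .inr fun i => ⟨by positivity,
        mul_lt_one_of_nonneg_of_lt_one_left (norm_nonneg μ) hμ1 (pow_le_one₀ hρ0.le hρ.le)⟩

theorem Hblock_mem_closure_typeIIaPairBundle (k : ℕ) {μ : ℂ} (hμ : μ ≠ 0) :
    Hblock k μ ∈ closure (typeIIaPairBundle k) := by
  have hcont : Continuous fun ρ => HblockOf (geomJblock k μ ρ) := by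
    simp only [HblockOf, geomJblock]
    fun_prop
  have hone : HblockOf (geomJblock k μ 1) = Hblock k μ := by
    simp [HblockOf, geomJblock, Hblock]
  rw [← hone]
  rcases le_or_gt 1 ‖μ‖ with hμ1 | hμ1
  · refine map_mem_closure (f := fun ρ => HblockOf (geomJblock k μ ρ)) (s := Set.Ioi 1) hcont
      (by simp [closure_Ioi]) fun ρ (hρ : 1 < ρ) => ?_
    exact HblockOf_geomJblock_mem k hμ (by linarith) (.inl ⟨hμ1, hρ⟩)
  · refine map_mem_closure (f := fun ρ => HblockOf (geomJblock k μ ρ)) (s := Set.Ioo 0 1) hcont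
      (by simp [closure_Ioo]) fun ρ hρ => ?_
    exact HblockOf_geomJblock_mem k hμ hρ.1 (.inr ⟨hμ1, hρ.2⟩)

theorem Hblock_mem_closure_congBundle_general (k : ℕ) (μ : ℂ)
    (hμ0 : μ ≠ 0) :
    ∃ h : finSize (fun _ : Fin k => 2) = k + k,
      Hblock k μ ∈
        closure {A : Matrix (Fin (k + k)) (Fin (k + k)) ℂ |
          ∃ (mu : Fin k → ℂ) (P : Matrix (Fin (k + k)) (Fin (k + k)) ℂ),
            IsUnit P ∧ (∀ i, TypeIIaParam (mu i)) ∧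
            (∀ i i', i ≠ i' → mu i ≠ mu i') ∧
            A = P * Matrix.reindex (finCongr h) (finCongr h) (pairH k mu) * Pᵀ} := by
  refine ⟨finSize_two k, closure_mono ?_ (Hblock_mem_closure_typeIIaPairBundle k hμ0)⟩
  rintro A ⟨ν, hν, hinj, P, hP, rfl⟩
  exact ⟨ν, P, hP, hν, fun i i' h => hinj.ne h, rfl⟩

/-- **Lemma 3.8(ii), congruence case.**  For `k ≥ 1` and `0 ≠ μ ≠ (-1)^(k+1)`, the
matrix `H_{2k}(μ)` belongs to the closure of the congruence bundle of a direct sum of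
`k` pairwise distinct `2 × 2` Type II-(a) blocks. -/
theorem Hblock_mem_closure_congBundle (k : ℕ) (hk : 1 ≤ k) (μ : ℂ)
    (hμ0 : μ ≠ 0) (hμ1 : μ ≠ (-1) ^ (k + 1)) :
    ∃ h : finSize (fun _ : Fin k => 2) = k + k,
      Hblock k μ ∈
        closure {A : Matrix (Fin (k + k)) (Fin (k + k)) ℂ |
          ∃ (mu : Fin k → ℂ) (P : Matrix (Fin (k + k)) (Fin (k + k)) ℂ),
            IsUnit P ∧ (∀ i, TypeIIaParam (mu i)) ∧
            (∀ i i', i ≠ i' → mu i ≠ mu i') ∧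
            A = P * Matrix.reindex (finCongr h) (finCongr h) (pairH k mu) * Pᵀ} :=
  Hblock_mem_closure_congBundle_general k μ hμ0
end
end

section
/- (Theorem 4.1(b2): the generic *congruence bundles are mutually non-overlapping.) For every n ≥ 1 and all integers ℓ_1, ℓ_2 with 0 ≤ ℓ_1, ℓ_2 ≤ ⌊n/2⌋ and ℓ_1 ≠ ℓ_2, the closure of 𝒢_{ℓ_1} is disjoint from 𝒢_{ℓ_2}, i.e., closure(𝒢_{ℓ_1}) ∩ 𝒢_{ℓ_2} = ∅. In particular, the closures of the ⌊n/2⌋ + 1 generic *congruence bundles are pairwise different. -/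
/-!
For `A ∈ 𝒢_ℓ` the polynomial `z ↦ det (A - z Aᴴ)` has the `n` simple roots `μ_i`, `1 / conj μ_i`
and `α_j²`, exactly `n - 2ℓ` of which lie on the unit circle; for every matrix of a bundle these
roots are symmetric under the reflection `z ↦ 1 / conj z` in the circle. The roots of a matrix `B`
of `𝒢_{ℓ'}` close to `A` lie near those of `A`, one near each. A root of `B` near a root of `A`
off the circle is off the circle; a root of `B` near a root of `A` on the circle is on it, since
otherwise its mirror image would be a second root of `B` near the same simple root of `A`.
Hence `n - 2ℓ' = n - 2ℓ`.
-/

open Matrix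

noncomputable section

/-- The generic *congruence bundle
`𝒢_ℓ = ℬ*(H_2(μ_1) ⊕ ⋯ ⊕ H_2(μ_ℓ) ⊕ diag(α_1, …, α_{n-2ℓ})) ⊆ ℂ^{n×n}`: all matrices
`P (H_2(μ_1) ⊕ ⋯ ⊕ H_2(μ_ℓ) ⊕ diag(α_1, …, α_{n-2ℓ})) Pᴴ` with `P` invertible,
`|μ_i| > 1` pairwise distinct, `|α_j| = 1` with `α_j² ≠ α_{j'}²` for `j ≠ j'`. -/
def genStar (n ℓ : ℕ) : Set (Matrix (Fin n) (Fin n) ℂ) :=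
  {A | ∃ (h : finSize (fun _ : Fin ℓ => 2) + (n - 2 * ℓ) = n)
      (mu : Fin ℓ → ℂ) (a : Fin (n - 2 * ℓ) → ℂ) (P : Matrix (Fin n) (Fin n) ℂ),
      IsUnit P ∧ (∀ i, 1 < ‖mu i‖) ∧ (∀ i i', i ≠ i' → mu i ≠ mu i') ∧
      (∀ j, ‖a j‖ = 1) ∧ (∀ j j', j ≠ j' → a j ^ 2 ≠ a j' ^ 2) ∧
      A = P * Matrix.reindex (finCongr h) (finCongr h)
            (dsum (pairH ℓ mu) (Matrix.diagonal a)) * Pᴴ}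

open ComplexConjugate Filter Topology Finset

/-- For invertible `M` its roots are the eigenvalues of the *cosquare `M⁻ᴴ M`, a *congruence
invariant. -/
def pencil {ι : Type*} [Fintype ι] [DecidableEq ι] (M : Matrix ι ι ℂ) (z : ℂ) : ℂ :=
  (M - z • Mᴴ).det

section Pencil

variable {ι κ : Type*} [Fintype ι] [DecidableEq ι] [Fintype κ] [DecidableEq κ]

theorem continuous_pencil (z : ℂ) : Continuous fun M : Matrix ι ι ℂ => pencil M z := by
  unfold pencil; fun_prop

@[simp]
theorem pencil_zero (M : Matrix ι ι ℂ) : pencil M 0 = M.det := by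
  simp [pencil]

theorem pencil_mul_mul_conjTranspose (P M : Matrix ι ι ℂ) (z : ℂ) :
    pencil (P * M * Pᴴ) z = P.det * conj P.det * pencil M z := by
  have : P * M * Pᴴ - z • (P * M * Pᴴ)ᴴ = P * (M - z • Mᴴ) * Pᴴ := by
    simp only [conjTranspose_mul, conjTranspose_conjTranspose, Matrix.mul_sub, Matrix.sub_mul,
      Matrix.mul_smul, Matrix.smul_mul, Matrix.mul_assoc]
  rw [pencil, this, det_mul, det_mul, det_conjTranspose, mul_right_comm, pencil]
  rfl

theorem pencil_reindex (e : ι ≃ κ) (M : Matrix ι ι ℂ) (z : ℂ) :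
    pencil (reindex e e M) z = pencil M z := by
  have : reindex e e M - z • (reindex e e M)ᴴ = reindex e e (M - z • Mᴴ) := by
    ext; simp
  rw [pencil, this, det_reindex_self, pencil]

theorem pencil_dsum {m k : ℕ} (A : Matrix (Fin m) (Fin m) ℂ) (B : Matrix (Fin k) (Fin k) ℂ)
    (z : ℂ) : pencil (dsum A B) z = pencil A z * pencil B z := by
  have : fromBlocks A 0 0 B - z • (fromBlocks A 0 0 B)ᴴ =
      fromBlocks (A - z • Aᴴ) 0 0 (B - z • Bᴴ) := by
    ext (i | i) (j | j) <;> simp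
  rw [dsum, pencil_reindex, pencil, this, det_fromBlocks_zero₂₁, pencil, pencil]

theorem pencil_H2 (μ z : ℂ) : pencil (H2 μ) z = (1 - z * conj μ) * (z - μ) := by
  simp [pencil, H2, det_fin_two, conjTranspose_apply]
  ring

theorem pencil_pairH (r : ℕ) (mu : Fin r → ℂ) (z : ℂ) :
    pencil (pairH r mu) z = ∏ i, pencil (H2 (mu i)) z := by
  induction r with
  | zero => exact det_fin_zero
  | succ r ih =>
    rw [Fin.prod_univ_succ, ← ih]
    exact pencil_dsum _ _ z

theorem pencil_diagonal (a : ι → ℂ) (z : ℂ) :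
    pencil (diagonal a) z = ∏ j, (a j - z * conj (a j)) := by
  rw [pencil, diagonal_conjTranspose, ← diagonal_smul, diagonal_sub, det_diagonal]
  rfl

end Pencil

theorem norm_sub_inv_conj (b : ℂ) : ‖b - (conj b)⁻¹‖ = |‖b‖ - ‖b‖⁻¹| := by
  rcases eq_or_ne b 0 with rfl | hb
  · simp
  have : b - (conj b)⁻¹ = b * ((1 - (‖b‖ ^ 2)⁻¹ : ℝ) : ℂ) := by
    rw [Complex.ofReal_sub, Complex.ofReal_inv, Complex.ofReal_pow, ← Complex.mul_conj',
      Complex.ofReal_one, mul_inv, mul_sub, ← mul_assoc, mul_inv_cancel₀ hb, one_mul, mul_one]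
  rw [this, norm_mul, Complex.norm_real, Real.norm_eq_abs, ← abs_norm, ← abs_mul, abs_norm]
  congr 1
  field_simp

theorem inv_conj_eq_self_iff {b : ℂ} (hb : b ≠ 0) : (conj b)⁻¹ = b ↔ ‖b‖ = 1 := by
  rw [eq_comm, ← sub_eq_zero, ← norm_eq_zero, norm_sub_inv_conj, abs_eq_zero, sub_eq_zero]
  have hpos := norm_pos_iff.2 hb
  constructor
  · intro h
    have := mul_inv_cancel₀ hpos.ne'
    rw [← h] at this
    nlinarith
  · intro h
    simp [h]

theorem norm_sub_inv_conj_le {b : ℂ} {ε : ℝ} (hε : ε ≤ 1 / 2) (hb : |‖b‖ - 1| < ε) :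
    ‖b - (conj b)⁻¹‖ ≤ 3 * ε := by
  rw [norm_sub_inv_conj]
  have hx : 1 / 2 < ‖b‖ := by linarith [neg_abs_le (‖b‖ - 1)]
  have : ‖b‖ - ‖b‖⁻¹ = (‖b‖ - 1) * (1 + ‖b‖⁻¹) := by field_simp; ring
  rw [this, abs_mul, abs_of_pos (by positivity : 0 < 1 + ‖b‖⁻¹)]
  have : ‖b‖⁻¹ < 2 := by rw [inv_lt_comm₀] <;> linarith
  nlinarith [abs_nonneg (‖b‖ - 1)]

section RootMatching

theorem exists_root_margin {ι : Type*} [Finite ι] (a : ι → ℂ) (ha : Function.Injective a) :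
    ∃ ε : ℝ, 0 < ε ∧ ε ≤ 1 / 2 ∧ (∀ t t', t ≠ t' → 5 * ε ≤ ‖a t - a t'‖) ∧
      ∀ t, ‖a t‖ ≠ 1 → ε ≤ |‖a t‖ - 1| := by
  have small : ∀ c : ℝ, 0 < c → ∀ᶠ ε in 𝓝[>] (0 : ℝ), 0 < ε ∧ 5 * ε ≤ c := fun c hc => by
    filter_upwards [self_mem_nhdsWithin, nhdsWithin_le_nhds
      (eventually_le_nhds (div_pos hc (by norm_num : (0 : ℝ) < 5)))] with ε hε hεc
    exact ⟨hε, by linarith⟩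
  have hsep : ∀ t t', ∀ᶠ ε in 𝓝[>] (0 : ℝ), t ≠ t' → 5 * ε ≤ ‖a t - a t'‖ := by
    intro t t'
    by_cases h : t = t'
    · exact .of_forall fun _ h' => absurd h h'
    · exact (small _ (norm_pos_iff.2 (sub_ne_zero.2 (ha.ne h)))).mono fun ε hε _ => hε.2
  have hgap : ∀ t, ∀ᶠ ε in 𝓝[>] (0 : ℝ), ‖a t‖ ≠ 1 → ε ≤ |‖a t‖ - 1| := by
    intro t
    by_cases h : ‖a t‖ = 1
    · exact .of_forall fun _ h' => absurd h h'
    · exact (small _ (abs_pos.2 (sub_ne_zero.2 h))).mono fun ε hε _ => by linarith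
  obtain ⟨ε, ⟨hε, hε2⟩, h1, h2⟩ := ((small (5 / 2) (by norm_num)).and
    ((eventually_all.2 fun t => eventually_all.2 (hsep t)).and (eventually_all.2 hgap))).exists
  exact ⟨ε, hε, by linarith, h1, h2⟩

theorem exists_norm_sub_lt_of_norm_mul_prod_lt {κ : Type*} [Fintype κ] {c z : ℂ} {r : κ → ℂ}
    {ε : ℝ} (hε : 0 ≤ ε) (h : ‖c * ∏ s, (z - r s)‖ < ‖c‖ * ε ^ Fintype.card κ) :
    ∃ s, ‖z - r s‖ < ε := by
  by_contra! hfar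
  have : ε ^ Fintype.card κ ≤ ∏ s, ‖z - r s‖ := by
    rw [← card_univ, ← prod_const]
    exact prod_le_prod (fun _ _ => hε) fun s _ => hfar s
  rw [norm_mul, norm_prod] at h
  exact h.not_ge (mul_le_mul_of_nonneg_left this (norm_nonneg c))

variable {ι κ : Type*} {a : ι → ℂ} {b : κ → ℂ} {F : ι → κ} {ε δ : ℝ}

theorem eq_of_norm_sub_lt (hsep : ∀ t t', t ≠ t' → δ + ε ≤ ‖a t - a t'‖)
    (hF : ∀ t, ‖a t - b (F t)‖ < ε) {t t' : ι} (h : ‖a t - b (F t')‖ < δ) : t = t' := by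
  by_contra hne
  have := norm_sub_le_norm_sub_add_norm_sub (a t) (b (F t')) (a t')
  rw [norm_sub_rev (b _)] at this
  linarith [hsep t t' hne, hF t']

/-- Were `b (F t)` off the circle, its mirror image would be a root of `b` within `4 ε` of `a t`,
and only `b (F t)` is that close. -/
theorem norm_eq_one_of_norm_sub_lt (hε : ε ≤ 1 / 2)
    (hsep : ∀ t t', t ≠ t' → 5 * ε ≤ ‖a t - a t'‖)
    (hb : ∀ s, ∃ s', b s' = (conj (b s))⁻¹) (hF : ∀ t, ‖a t - b (F t)‖ < ε)
    (hFs : Function.Surjective F) {t : ι} (ht : ‖a t‖ = 1) : ‖b (F t)‖ = 1 := by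
  have hclose : |‖b (F t)‖ - 1| < ε := by
    rw [← ht, abs_sub_comm]
    exact (abs_norm_sub_norm_le _ _).trans_lt (hF t)
  have hb0 : b (F t) ≠ 0 := by
    rintro h
    rw [h, norm_zero, zero_sub, abs_neg, abs_one] at hclose
    linarith
  obtain ⟨s', hs'⟩ := hb (F t)
  obtain ⟨t', rfl⟩ := hFs s'
  have hpartner : ‖a t - b (F t')‖ < 4 * ε := by
    rw [hs']
    calc ‖a t - (conj (b (F t)))⁻¹‖
        ≤ ‖a t - b (F t)‖ + ‖b (F t) - (conj (b (F t)))⁻¹‖ :=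
          norm_sub_le_norm_sub_add_norm_sub _ _ _
      _ < ε + 3 * ε := add_lt_add_of_lt_of_le (hF t) (norm_sub_inv_conj_le hε hclose)
      _ = 4 * ε := by ring
  obtain rfl := eq_of_norm_sub_lt (fun t t' h => by linarith [hsep t t' h]) hF hpartner
  exact (inv_conj_eq_self_iff hb0).1 hs'.symm

theorem card_norm_eq_one_eq [Fintype ι] [Fintype κ] (hcard : Fintype.card ι = Fintype.card κ)
    (hε : 0 < ε) (hε2 : ε ≤ 1 / 2) (hsep : ∀ t t', t ≠ t' → 5 * ε ≤ ‖a t - a t'‖)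
    (hgap : ∀ t, ‖a t‖ ≠ 1 → ε ≤ |‖a t‖ - 1|) (hb : ∀ s, ∃ s', b s' = (conj (b s))⁻¹)
    (hnear : ∀ t, ∃ s, ‖a t - b s‖ < ε) :
    Fintype.card {t // ‖a t‖ = 1} = Fintype.card {s // ‖b s‖ = 1} := by
  choose F hF using hnear
  have hFbij : Function.Bijective F := by
    refine (Fintype.bijective_iff_injective_and_card F).2 ⟨fun t t' h => ?_, hcard⟩
    exact eq_of_norm_sub_lt (fun t t' h => by linarith [hsep t t' h]) hF (h ▸ hF t)
  refine Fintype.card_congr (.subtypeEquiv (.ofBijective F hFbij) fun t => ?_)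
  refine ⟨norm_eq_one_of_norm_sub_lt hε2 hsep hb hF hFbij.2, fun h => ?_⟩
  by_contra ht
  have := (abs_norm_sub_norm_le (a t) (b (F t))).trans_lt (hF t)
  rw [Equiv.ofBijective_apply, h] at *
  linarith [hgap t ht]

end RootMatching

theorem eventually_norm_pencil_lt {ι : Type*} [Fintype ι] [DecidableEq ι] {A : Matrix ι ι ℂ}
    {z : ℂ} (hz : pencil A z = 0) (hA : A.det ≠ 0) {δ : ℝ} (hδ : 0 < δ) :
    ∀ᶠ B in 𝓝 A, ‖pencil B z‖ < ‖B.det‖ * δ :=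
  (continuous_pencil z).norm.continuousAt.eventually_lt
    (continuous_id.matrix_det.norm.mul continuous_const).continuousAt
    (by simpa [hz] using mul_pos (norm_pos_iff.2 hA) hδ)

structure IsPencilFactorization {m ι : Type*} [Fintype m] [DecidableEq m] [Fintype ι]
    (M : Matrix m m ℂ) (c : ℂ) (r : ι → ℂ) : Prop where
  det_ne_zero : M.det ≠ 0
  norm_det : ‖M.det‖ = ‖c‖
  pencil_eq : ∀ z, pencil M z = c * ∏ s, (z - r s)
  injective : Function.Injective r
  exists_eq_inv_conj : ∀ s, ∃ s', r s' = (conj (r s))⁻¹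

theorem IsPencilFactorization.pencil_eq_zero {m ι : Type*} [Fintype m] [DecidableEq m]
    [Fintype ι] {M : Matrix m m ℂ} {c : ℂ} {r : ι → ℂ} (h : IsPencilFactorization M c r) (s : ι) :
    pencil M (r s) = 0 := by
  rw [h.pencil_eq, prod_eq_zero (mem_univ s) (sub_self _), mul_zero]

theorem norm_det_eq_of_pencil_eq {ι κ : Type*} [Fintype ι] [DecidableEq ι] [Fintype κ]
    {M : Matrix ι ι ℂ} {c : ℂ} {r : κ → ℂ} (h : ∀ z, pencil M z = c * ∏ s, (z - r s))
    (hr : ∏ s, ‖r s‖ = 1) : ‖M.det‖ = ‖c‖ := by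
  simp [← pencil_zero, h, norm_prod, hr]

def pencilRoots {ℓ m : ℕ} (mu : Fin ℓ → ℂ) (a : Fin m → ℂ) : Fin ℓ ⊕ Fin ℓ ⊕ Fin m → ℂ :=
  Sum.elim mu (Sum.elim (fun i => (conj (mu i))⁻¹) fun j => a j ^ 2)

section PencilRoots

variable {ℓ m : ℕ} {mu : Fin ℓ → ℂ} {a : Fin m → ℂ}

theorem pencil_H2_eq_mul {μ : ℂ} (hμ : μ ≠ 0) (z : ℂ) :
    pencil (H2 μ) z = -conj μ * ((z - μ) * (z - (conj μ)⁻¹)) := by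
  have : conj μ ≠ 0 := by simpa using hμ
  rw [pencil_H2]
  field_simp
  ring

theorem sub_mul_conj_eq_mul {α : ℂ} (hα : ‖α‖ = 1) (z : ℂ) :
    α - z * conj α = -conj α * (z - α ^ 2) := by
  have : α * conj α = 1 := by rw [Complex.mul_conj', hα]; norm_num
  linear_combination -α * this

theorem pencil_dsum_pairH_diagonal (hmu : ∀ i, mu i ≠ 0) (ha : ∀ j, ‖a j‖ = 1) (z : ℂ) :
    pencil (dsum (pairH ℓ mu) (diagonal a)) z =
      ((∏ i, -conj (mu i)) * ∏ j, -conj (a j)) * ∏ s, (z - pencilRoots mu a s) := by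
  simp only [pencil_dsum, pencil_pairH, pencil_diagonal, pencil_H2_eq_mul (hmu _),
    sub_mul_conj_eq_mul (ha _), prod_mul_distrib, Fintype.prod_sum_type, pencilRoots,
    Sum.elim_inl, Sum.elim_inr]
  ring

theorem prod_norm_pencilRoots (hmu : ∀ i, mu i ≠ 0) (ha : ∀ j, ‖a j‖ = 1) :
    ∏ s, ‖pencilRoots mu a s‖ = 1 := by
  simp only [pencilRoots, Fintype.prod_sum_type, Sum.elim_inl, Sum.elim_inr, norm_inv,
    Complex.norm_conj, norm_pow, ha, one_pow, prod_const_one, mul_one, prod_inv_distrib]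
  exact mul_inv_cancel₀ (prod_ne_zero_iff.2 fun i _ => norm_ne_zero_iff.2 (hmu i))

theorem injective_pencilRoots (hmu : ∀ i, 1 < ‖mu i‖) (hmu_inj : Function.Injective mu)
    (ha : ∀ j, ‖a j‖ = 1) (ha_inj : Function.Injective fun j => a j ^ 2) :
    Function.Injective (pencilRoots mu a) := by
  have hinv : ∀ i, ‖(conj (mu i))⁻¹‖ < 1 := fun i => by
    simpa using inv_lt_one_of_one_lt₀ (hmu i)
  refine hmu_inj.sumElim (Function.Injective.sumElim ?_ ha_inj ?_) ?_
  · exact inv_injective.comp ((RingHom.injective _).comp hmu_inj)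
  · intro i j h
    have := congrArg norm h
    simp only [norm_pow, ha, one_pow] at this
    exact (hinv i).ne this
  · rintro i (i' | j) h <;> have := congrArg norm h <;>
      simp only [Sum.elim_inl, Sum.elim_inr, norm_pow, ha, one_pow] at this
    · exact (hinv i').not_gt (this ▸ hmu i)
    · exact (hmu i).ne' this

theorem exists_pencilRoots_eq_inv_conj (ha : ∀ j, ‖a j‖ = 1) (s) :
    ∃ s', pencilRoots mu a s' = (conj (pencilRoots mu a s))⁻¹ := by
  rcases s with i | i | j
  · exact ⟨.inr (.inl i), rfl⟩
  · exact ⟨.inl i, by simp [pencilRoots]⟩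
  · refine ⟨.inr (.inr j), ((inv_conj_eq_self_iff ?_).2 ?_).symm⟩ <;>
      simp [pencilRoots, ha, ← norm_pos_iff]

theorem card_norm_pencilRoots_eq_one (hmu : ∀ i, 1 < ‖mu i‖) (ha : ∀ j, ‖a j‖ = 1) :
    Fintype.card {s // ‖pencilRoots mu a s‖ = 1} = m := by
  rw [Fintype.card_subtype, card_filter]
  simp [Fintype.sum_sum_type, pencilRoots, ha, (hmu _).ne']

end PencilRoots

section GenStar

variable {n ℓ : ℕ} {M : Matrix (Fin n) (Fin n) ℂ}

theorem finSize_const_two (q : ℕ) : finSize (fun _ : Fin q => 2) = 2 * q := by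
  induction q with
  | zero => rfl
  | succ q ih => exact (congrArg (2 + ·) ih).trans (by ring)

theorem two_mul_le_of_mem_genStar (hM : M ∈ genStar n ℓ) : 2 * ℓ ≤ n := by
  obtain ⟨h, -⟩ := hM
  rw [finSize_const_two] at h
  omega

theorem exists_isPencilFactorization_of_mem_genStar (hM : M ∈ genStar n ℓ) :
    ∃ (c : ℂ) (r : Fin ℓ ⊕ Fin ℓ ⊕ Fin (n - 2 * ℓ) → ℂ),
      IsPencilFactorization M c r ∧ Fintype.card {s // ‖r s‖ = 1} = n - 2 * ℓ := by
  obtain ⟨h, mu, a, P, hP, hmu, hmu_inj, ha, ha_inj, rfl⟩ := hM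
  have hmu0 : ∀ i, mu i ≠ 0 := fun i => norm_pos_iff.1 (one_pos.trans (hmu i))
  have ha0 : ∀ j, a j ≠ 0 := fun j => norm_ne_zero_iff.1 (by rw [ha j]; exact one_ne_zero)
  have hP0 : P.det ≠ 0 := ((isUnit_iff_isUnit_det P).1 hP).ne_zero
  set c := P.det * conj P.det * ((∏ i, -conj (mu i)) * ∏ j, -conj (a j))
  have hc : c ≠ 0 := by
    simp [c, hP0, prod_ne_zero_iff, hmu0, ha0]
  have hpencil : ∀ z, pencil (P * reindex (finCongr h) (finCongr h)
      (dsum (pairH ℓ mu) (diagonal a)) * Pᴴ) z = c * ∏ s, (z - pencilRoots mu a s) := by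
    intro z
    rw [pencil_mul_mul_conjTranspose, pencil_reindex, pencil_dsum_pairH_diagonal hmu0 ha]
    simp only [c, mul_assoc]
  have hnorm := norm_det_eq_of_pencil_eq hpencil (prod_norm_pencilRoots hmu0 ha)
  refine ⟨c, pencilRoots mu a, ⟨?_, hnorm, hpencil, ?_, exists_pencilRoots_eq_inv_conj ha⟩,
    card_norm_pencilRoots_eq_one hmu ha⟩
  · rw [← norm_ne_zero_iff, hnorm, norm_ne_zero_iff]
    exact hc
  · exact injective_pencilRoots hmu (fun i i' => not_imp_not.1 (hmu_inj i i')) ha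
      fun j j' => not_imp_not.1 (ha_inj j j')

theorem eq_of_mem_genStar_of_mem_closure {ℓ₁ ℓ₂ : ℕ} {A : Matrix (Fin n) (Fin n) ℂ}
    (hA : A ∈ genStar n ℓ₂) (hA' : A ∈ closure (genStar n ℓ₁)) : ℓ₁ = ℓ₂ := by
  obtain ⟨cA, rA, hfA, hcardA⟩ := exists_isPencilFactorization_of_mem_genStar hA
  obtain ⟨ε, hε, hε2, hsep, hgap⟩ := exists_root_margin rA hfA.injective
  have hnearA : ∀ᶠ B in 𝓝 A, ∀ t, ‖pencil B (rA t)‖ < ‖B.det‖ * ε ^ n := eventually_all.2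
    fun t => eventually_norm_pencil_lt (hfA.pencil_eq_zero t) hfA.det_ne_zero (pow_pos hε n)
  obtain ⟨B, hB, hBA⟩ := ((mem_closure_iff_frequently.1 hA').and_eventually hnearA).exists
  obtain ⟨cB, rB, hfB, hcardB⟩ := exists_isPencilFactorization_of_mem_genStar hB
  have h₁ := two_mul_le_of_mem_genStar hB
  have h₂ := two_mul_le_of_mem_genStar hA
  have hcard : ∀ ℓ, 2 * ℓ ≤ n → Fintype.card (Fin ℓ ⊕ Fin ℓ ⊕ Fin (n - 2 * ℓ)) = n := by
    intro ℓ hℓ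
    simp only [Fintype.card_sum, Fintype.card_fin]
    omega
  have hnear : ∀ t, ∃ s, ‖rA t - rB s‖ < ε := fun t => by
    refine exists_norm_sub_lt_of_norm_mul_prod_lt (c := cB) hε.le ?_
    rw [← hfB.pencil_eq, ← hfB.norm_det, hcard ℓ₁ h₁]
    exact hBA t
  have := card_norm_eq_one_eq ((hcard ℓ₂ h₂).trans (hcard ℓ₁ h₁).symm) hε hε2 hsep hgap
    hfB.exists_eq_inv_conj hnear
  omega

theorem exists_norm_eq_one_injective_sq (m : ℕ) :
    ∃ a : Fin m → ℂ, (∀ j, ‖a j‖ = 1) ∧ Function.Injective fun j => a j ^ 2 := by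
  refine ⟨fun j => Circle.exp (Real.arctan (j : ℕ)), fun j => Circle.norm_coe _,
    fun j j' h => ?_⟩
  have hmem : ∀ j : Fin m, 2 * Real.arctan (j : ℕ) ∈ Set.Ioc (-Real.pi) Real.pi := fun j =>
    ⟨by linarith [Real.neg_pi_div_two_lt_arctan (j : ℕ)],
      by linarith [Real.arctan_lt_pi_div_two (j : ℕ)]⟩
  have hexp :
      Circle.exp (2 * Real.arctan (j : ℕ)) = Circle.exp (2 * Real.arctan (j' : ℕ)) := by
    rw [two_mul, two_mul, Circle.exp_add, Circle.exp_add, ← Circle.coe_inj, Circle.coe_mul,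
      Circle.coe_mul, ← sq, ← sq]
    exact h
  have := Circle.exp_injOn_Ioc (by linarith) (hmem j) (hmem j') hexp
  exact Fin.ext (Nat.cast_injective (R := ℝ) (Real.arctan_strictMono.injective (by linarith)))

theorem genStar_nonempty (h : ℓ ≤ n / 2) : (genStar n ℓ).Nonempty := by
  obtain ⟨a, ha, ha_inj⟩ := exists_norm_eq_one_injective_sq (n - 2 * ℓ)
  have hsize : finSize (fun _ : Fin ℓ => 2) + (n - 2 * ℓ) = n := by
    rw [finSize_const_two]
    omega
  refine ⟨_, hsize, fun i => ((i + 2 : ℕ) : ℂ), a, 1, isUnit_one, fun i => ?_,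
    fun i i' hne heq => hne (Fin.ext ?_), ha, fun j j' hne => ha_inj.ne hne, rfl⟩
  · rw [Complex.norm_natCast]
    exact_mod_cast Nat.lt_add_left _ one_lt_two
  · exact Nat.add_right_cancel (Nat.cast_injective heq)

end GenStar

theorem closure_genStar_inter_genStar_eq_empty_general (n ℓ₁ ℓ₂ : ℕ)
    (h₂ : ℓ₂ ≤ n / 2) (hne : ℓ₁ ≠ ℓ₂) :
    closure (genStar n ℓ₁) ∩ genStar n ℓ₂ = ∅ ∧
      closure (genStar n ℓ₁) ≠ closure (genStar n ℓ₂) := by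
  have hdisj : closure (genStar n ℓ₁) ∩ genStar n ℓ₂ = ∅ :=
    Set.eq_empty_of_forall_notMem fun A ⟨hA', hA⟩ =>
      hne (eq_of_mem_genStar_of_mem_closure hA hA')
  refine ⟨hdisj, fun hcl => ?_⟩
  obtain ⟨A, hA⟩ := genStar_nonempty h₂
  exact hdisj.subset ⟨hcl ▸ subset_closure hA, hA⟩

/-- **Theorem 4.1(b2).**  For every `n ≥ 1`, the closure of `𝒢_{ℓ₁}` is disjoint from
`𝒢_{ℓ₂}` whenever `ℓ₁ ≠ ℓ₂`; in particular the closures of the `⌊n/2⌋ + 1` generic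
*congruence bundles are pairwise different. -/
theorem closure_genStar_inter_genStar_eq_empty (n ℓ₁ ℓ₂ : ℕ) (hn : 1 ≤ n)
    (h₁ : ℓ₁ ≤ n / 2) (h₂ : ℓ₂ ≤ n / 2) (hne : ℓ₁ ≠ ℓ₂) :
    closure (genStar n ℓ₁) ∩ genStar n ℓ₂ = ∅ ∧
      closure (genStar n ℓ₁) ≠ closure (genStar n ℓ₂) :=
  closure_genStar_inter_genStar_eq_empty_general n ℓ₁ ℓ₂ h₂ hne
end
end
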